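/- Let T, N, B : I → ℝ³ with curvature κ and torsion τ be a Frenet-framed unit speed spacelike curve with timelike normal in Minkowski 3-space on an open interval I. Then the curve is a slant helix (i.e. there is a constant vector U ≠ 0 with s ↦ ⟨N(s),U⟩ constant) if and only if there is a real constant c such that for all s ∈ I, (κ(s)²/(τ(s)² + κ(s)²)^{3/2}) · (τ/κ)'(s) = c. -/

import Mathlib

open Real Matrix

noncomputable def mink (x y : Fin 3 → ℝ) : ℝ := x 0 * y 0 + x 1 * y 1 - x 2 * y 2

lemma mink_comm (x y : Fin 3 → ℝ) : mink x y = mink y x := by simp only [mink]; ring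

lemma constOn {I : Set ℝ} (hconv : I.OrdConnected) (hIopen : IsOpen I) {E : Type*}
    [NormedAddCommGroup E] [NormedSpace ℝ E] {f : ℝ → E}
    (hf : ∀ s ∈ I, HasDerivAt f 0 s) {a b : ℝ} (ha : a ∈ I) (hb : b ∈ I) : f a = f b := by
  refine hconv.convex.is_const_of_fderivWithin_eq_zero
    (fun s hs => ((hf s hs).differentiableAt).differentiableWithinAt) (fun s hs => ?_) ha hb
  rw [fderivWithin_of_isOpen hIopen hs, (hf s hs).hasFDerivAt.fderiv]
  ext
  simp

lemma const_of_sq_const {I : Set ℝ} (hconv : I.OrdConnected) {f : ℝ → ℝ}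
    (hf : ContinuousOn f I) {m : ℝ} (hm : 0 < m) (hsq : ∀ s ∈ I, f s ^ 2 = m)
    {a b : ℝ} (ha : a ∈ I) (hb : b ∈ I) : f a = f b := by
  have hsub : Set.uIcc a b ⊆ I := hconv.uIcc_subset ha hb
  have hiv := intermediate_value_uIcc (hf.mono hsub)
  by_contra hne
  have h0 : (0 : ℝ) ∈ Set.uIcc (f a) (f b) := by
    have hfa : f a ^ 2 = m := hsq a ha
    have hfb : f b ^ 2 = m := hsq b hb
    have : f a = - f b := by
      have : (f a - f b) * (f a + f b) = 0 := by nlinarith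
      rcases mul_eq_zero.1 this with h | h
      · exact absurd (by linarith) hne
      · linarith
    rcases lt_trichotomy (f b) 0 with h | h | h
    · exact Set.mem_uIcc.2 (Or.inr ⟨by linarith, by nlinarith⟩)
    · nlinarith [hsq b hb]
    · exact Set.mem_uIcc.2 (Or.inl ⟨by nlinarith, by linarith⟩)
  obtain ⟨s, hs, hfs⟩ := hiv h0
  have := hsq s (hsub hs)
  rw [hfs] at this
  nlinarith

lemma frame_nondeg (t n b u : Fin 3 → ℝ)
    (htt : mink t t = 1) (hnn : mink n n = -1) (hbb : mink b b = 1)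
    (htn : mink t n = 0) (htb : mink t b = 0) (hnb : mink n b = 0)
    (hu1 : mink t u = 0) (hu2 : mink n u = 0) (hu3 : mink b u = 0) : u = 0 := by
  simp only [mink] at htt hnn hbb htn htb hnb hu1 hu2 hu3
  set M : Matrix (Fin 3) (Fin 3) ℝ := Matrix.of ![t, n, b] with hM
  set Jm : Matrix (Fin 3) (Fin 3) ℝ := !![1,0,0;0,1,0;0,0,-1] with hJm
  have hMJM : M * Jm * M.transpose = !![1,0,0;0,-1,0;0,0,1] := by
    ext i j
    fin_cases i <;> fin_cases j <;>
      simp [hM, hJm, Matrix.mul_apply, Fin.sum_univ_three, Matrix.transpose_apply,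
        Matrix.vecHead, Matrix.vecTail, Function.comp] <;> linarith
  have hdet : M.det ≠ 0 := by
    have h1 := congrArg Matrix.det hMJM
    rw [Matrix.det_mul, Matrix.det_mul, Matrix.det_transpose] at h1
    have h2 : Jm.det = -1 := by simp [hJm, Matrix.det_fin_three]
    have h3 : (!![(1:ℝ),0,0;0,-1,0;0,0,1]).det = -1 := by
      simp [Matrix.det_fin_three]
    rw [h2, h3] at h1
    intro h
    rw [h] at h1
    norm_num at h1
  have hv : M.mulVec (Jm.mulVec u) = 0 := by
    ext i
    fin_cases i <;>
      simp [hM, hJm, Matrix.mulVec, dotProduct, Fin.sum_univ_three,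
        Matrix.vecHead, Matrix.vecTail, Function.comp] <;> linarith
  have h0 := Matrix.eq_zero_of_mulVec_eq_zero hdet hv
  funext i
  fin_cases i
  · simpa [hJm, Matrix.mulVec, dotProduct, Fin.sum_univ_three,
      Matrix.vecHead, Matrix.vecTail, Function.comp] using congrFun h0 0
  · simpa [hJm, Matrix.mulVec, dotProduct, Fin.sum_univ_three,
      Matrix.vecHead, Matrix.vecTail, Function.comp] using congrFun h0 1
  · have := congrFun h0 2
    simp [hJm, Matrix.mulVec, dotProduct, Fin.sum_univ_three,
      Matrix.vecHead, Matrix.vecTail, Function.comp] at this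
    simpa using this

lemma hasDerivAt_mink {f : ℝ → Fin 3 → ℝ} {v : Fin 3 → ℝ} (U : Fin 3 → ℝ) {s : ℝ}
    (hf : HasDerivAt f v s) :
    HasDerivAt (fun s => mink (f s) U) (mink v U) s := by
  have h := hasDerivAt_pi.1 hf
  simp only [mink]
  exact
    (((h 0).mul_const (U 0)).add ((h 1).mul_const (U 1))).sub ((h 2).mul_const (U 2))

lemma mink_smul_left (a : ℝ) (x y : Fin 3 → ℝ) : mink (a • x) y = a * mink x y := by
  simp [mink]; ring

lemma mink_comb_right (w : Fin 3 → ℝ) (a b e : ℝ) (x y z : Fin 3 → ℝ) :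
    mink w (a • x + b • y + e • z) = a * mink w x + b * mink w y + e * mink w z := by
  simp [mink]; ring

lemma mink_comb_left (w : Fin 3 → ℝ) (a b e : ℝ) (x y z : Fin 3 → ℝ) :
    mink (a • x + b • y + e • z) w = a * mink x w + b * mink y w + e * mink z w := by
  simp [mink]; ring

lemma rpow_three_half {x : ℝ} (hx : 0 < x) : x ^ ((3:ℝ)/2) = x * Real.sqrt x := by
  rw [show ((3:ℝ)/2) = 1 + 1/2 by norm_num, Real.rpow_add hx, Real.rpow_one,
    Real.sqrt_eq_rpow]

theorem stmt4
    (I : Set ℝ) (hIopen : IsOpen I) (hIconn : I.OrdConnected)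
    (T N B : ℝ → Fin 3 → ℝ) (κ τ : ℝ → ℝ)
    (hTs : ContDiffOn ℝ (⊤ : ℕ∞) T I) (hNs : ContDiffOn ℝ (⊤ : ℕ∞) N I)
    (hBs : ContDiffOn ℝ (⊤ : ℕ∞) B I)
    (hκs : ContDiffOn ℝ (⊤ : ℕ∞) κ I) (hκ0 : ∀ s ∈ I, κ s ≠ 0)
    (hτs : ContDiffOn ℝ (⊤ : ℕ∞) τ I) (hτ0 : ∀ s ∈ I, τ s ≠ 0)
    (hTT : ∀ s ∈ I, mink (T s) (T s) = 1)
    (hNN : ∀ s ∈ I, mink (N s) (N s) = -1)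
    (hBB : ∀ s ∈ I, mink (B s) (B s) = 1)
    (hTN : ∀ s ∈ I, mink (T s) (N s) = 0)
    (hTB : ∀ s ∈ I, mink (T s) (B s) = 0)
    (hNB : ∀ s ∈ I, mink (N s) (B s) = 0)
    (hT' : ∀ s ∈ I, HasDerivAt T (κ s • N s) s)
    (hN' : ∀ s ∈ I, HasDerivAt N (κ s • T s + τ s • B s) s)
    (hB' : ∀ s ∈ I, HasDerivAt B (τ s • N s) s)
 :
    (∃ U : Fin 3 → ℝ, U ≠ 0 ∧ ∃ d : ℝ, ∀ s ∈ I, mink (N s) U = d) ↔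
      (∃ c : ℝ, ∀ s ∈ I, κ s ^ 2 / (τ s ^ 2 + κ s ^ 2) ^ ((3 : ℝ) / 2) * deriv (fun u => τ u / κ u) s = c) := by
  -- preliminaries
  have hκd : ∀ s ∈ I, HasDerivAt κ (deriv κ s) s := fun s hs =>
    (((hκs.differentiableOn (by simp)) s hs).differentiableAt (hIopen.mem_nhds hs)).hasDerivAt
  have hτd : ∀ s ∈ I, HasDerivAt τ (deriv τ s) s := fun s hs =>
    (((hτs.differentiableOn (by simp)) s hs).differentiableAt (hIopen.mem_nhds hs)).hasDerivAt
  have hD : ∀ s ∈ I, 0 < τ s ^ 2 + κ s ^ 2 := fun s hs => by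
    have := hκ0 s hs; positivity
  have hsqD : ∀ s ∈ I, 0 < Real.sqrt (τ s ^ 2 + κ s ^ 2) := fun s hs =>
    Real.sqrt_pos.2 (hD s hs)
  have hmulD : ∀ s ∈ I, Real.sqrt (τ s ^ 2 + κ s ^ 2) * Real.sqrt (τ s ^ 2 + κ s ^ 2)
      = τ s ^ 2 + κ s ^ 2 := fun s hs => Real.mul_self_sqrt (hD s hs).le
  have hq : ∀ s ∈ I, HasDerivAt (fun u => τ u / κ u)
      ((deriv τ s * κ s - τ s * deriv κ s) / κ s ^ 2) s := fun s hs =>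
    (hτd s hs).div (hκd s hs) (hκ0 s hs)
  constructor
  · rintro ⟨U, hU, d, hNU⟩
    rcases I.eq_empty_or_nonempty with hIe | ⟨s0, hs0⟩
    · exact ⟨0, fun s hs => by rw [hIe] at hs; exact absurd hs (Set.notMem_empty s)⟩
    set u1 : ℝ → ℝ := fun s => mink (T s) U with hu1def
    set u3 : ℝ → ℝ := fun s => mink (B s) U with hu3def
    have hu1' : ∀ s ∈ I, HasDerivAt u1 (κ s * d) s := fun s hs => by
      have h := hasDerivAt_mink U (hT' s hs)
      rwa [mink_smul_left, hNU s hs] at h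
    have hu3' : ∀ s ∈ I, HasDerivAt u3 (τ s * d) s := fun s hs => by
      have h := hasDerivAt_mink U (hB' s hs)
      rwa [mink_smul_left, hNU s hs] at h
    have hrel : ∀ s ∈ I, κ s * u1 s + τ s * u3 s = 0 := by
      intro s hs
      have h1 : HasDerivAt (fun x => mink (N x) U) (κ s * u1 s + τ s * u3 s) s := by
        have h := hasDerivAt_mink U (hN' s hs)
        have : mink (κ s • T s + τ s • B s) U = κ s * u1 s + τ s * u3 s := by
          simp [hu1def, hu3def, mink]; ring
        rwa [this] at h
      have h2 : HasDerivAt (fun x => mink (N x) U) 0 s := by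
        refine (hasDerivAt_const s d).congr_of_eventuallyEq ?_
        filter_upwards [hIopen.mem_nhds hs] with x hx using hNU x hx
      exact h1.unique h2
    have hmconst : ∀ s ∈ I, u1 s ^ 2 + u3 s ^ 2 = u1 s0 ^ 2 + u3 s0 ^ 2 := by
      intro s hs
      refine constOn hIconn hIopen (f := fun x => u1 x ^ 2 + u3 x ^ 2) ?_ hs hs0
      intro x hx
      have h := (((hu1' x hx).pow 2).add ((hu3' x hx).pow 2))
      convert h using 1
      · rfl
      push_cast
      linear_combination (-2 * d) * hrel x hx
    by_cases hd : d = 0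
    · subst hd
      have hu1c : ∀ s ∈ I, u1 s = u1 s0 := fun s hs =>
        constOn hIconn hIopen (f := u1) (fun x hx => by simpa using hu1' x hx) hs hs0
      have hu3c : ∀ s ∈ I, u3 s = u3 s0 := fun s hs =>
        constOn hIconn hIopen (f := u3) (fun x hx => by simpa using hu3' x hx) hs hs0
      by_cases h3 : u3 s0 = 0
      · exfalso
        apply hU
        have h1 : u1 s0 = 0 := by
          have h := hrel s0 hs0
          rw [h3] at h
          have hκ := hκ0 s0 hs0
          rcases mul_eq_zero.1 (by linarith : κ s0 * u1 s0 = 0) with h' | h'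
          · exact absurd h' hκ
          · exact h'
        exact frame_nondeg (T s0) (N s0) (B s0) U (hTT s0 hs0) (hNN s0 hs0) (hBB s0 hs0)
          (hTN s0 hs0) (hTB s0 hs0) (hNB s0 hs0) h1 (hNU s0 hs0) h3
      · refine ⟨0, fun s hs => ?_⟩
        have hconst : ∀ x ∈ I, τ x / κ x = -u1 s0 / u3 s0 := by
          intro x hx
          have h := hrel x hx
          rw [hu1c x hx, hu3c x hx] at h
          rw [div_eq_div_iff (hκ0 x hx) h3]
          linear_combination h
        have : deriv (fun u => τ u / κ u) s = 0 := by
          have hev : (fun u => τ u / κ u) =ᶠ[nhds s] fun _ => -u1 s0 / u3 s0 := by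
            filter_upwards [hIopen.mem_nhds hs] with x hx using hconst x hx
          rw [hev.deriv_eq, deriv_const]
        rw [this]; ring
    · -- d ≠ 0
      have hu3ne : ∀ s ∈ I, u3 s ≠ 0 := by
        intro s1 hs1 h31
        have h11 : u1 s1 = 0 := by
          have h := hrel s1 hs1
          rw [h31] at h
          have hκ := hκ0 s1 hs1
          rcases mul_eq_zero.1 (by linarith : κ s1 * u1 s1 = 0) with h' | h'
          · exact absurd h' hκ
          · exact h'
        have hm0 : u1 s0 ^ 2 + u3 s0 ^ 2 = 0 := by
          rw [← hmconst s1 hs1, h31, h11]; ring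
        have hu3all : ∀ x ∈ I, u3 x = 0 := by
          intro x hx
          have hx2 := hmconst x hx
          rw [hm0] at hx2
          nlinarith [sq_nonneg (u1 x), sq_nonneg (u3 x)]
        have h1 : HasDerivAt u3 0 s1 := by
          refine (hasDerivAt_const s1 (0:ℝ)).congr_of_eventuallyEq ?_
          filter_upwards [hIopen.mem_nhds hs1] with x hx using hu3all x hx
        have := (hu3' s1 hs1).unique h1
        exact hτ0 s1 hs1 (by rcases mul_eq_zero.1 this with h | h; exact h; exact absurd h hd)
      have hm_pos : 0 < u1 s0 ^ 2 + u3 s0 ^ 2 := by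
        have := hu3ne s0 hs0
        positivity
      set m : ℝ := u1 s0 ^ 2 + u3 s0 ^ 2 with hm
      set G : ℝ → ℝ := fun s => -(d * κ s) / (Real.sqrt (τ s ^ 2 + κ s ^ 2) * u3 s) with hG
      have hvert : ∀ s ∈ I, u3 s ^ 2 * (τ s ^ 2 + κ s ^ 2) = m * κ s ^ 2 := by
        intro s hs
        have h := hrel s hs
        have hκ := hκ0 s hs
        have hmm := hmconst s hs
        linear_combination (τ s * u3 s - κ s * u1 s) * h + κ s ^ 2 * hmm
      have hGsq : ∀ s ∈ I, G s ^ 2 = d ^ 2 / m := by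
        intro s hs
        have hv := hvert s hs
        have hκ := hκ0 s hs
        have hu3 := hu3ne s hs
        have hs1 := (hsqD s hs).ne'
        have hmul := hmulD s hs
        rw [hG]
        beta_reduce
        rw [div_pow, mul_pow, Real.sq_sqrt (hD s hs).le,
          div_eq_div_iff (mul_ne_zero (hD s hs).ne' (pow_ne_zero 2 hu3)) hm_pos.ne']
        linear_combination (-(d ^ 2)) * hv
      have hGcont : ContinuousOn G I := by
        have hBc : ContinuousOn B I := hBs.continuousOn
        have hu3cont : ContinuousOn u3 I := by
          simp only [hu3def, mink]
          exact ((((continuous_apply 0).comp_continuousOn hBc).mul continuousOn_const).add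
            (((continuous_apply 1).comp_continuousOn hBc).mul continuousOn_const)).sub
            (((continuous_apply 2).comp_continuousOn hBc).mul continuousOn_const)
        have hκcont : ContinuousOn κ I := hκs.continuousOn
        have hτcont : ContinuousOn τ I := hτs.continuousOn
        refine ContinuousOn.div (continuousOn_const.mul hκcont).neg
          ((Real.continuous_sqrt.comp_continuousOn
            (((hτcont.pow 2).add (hκcont.pow 2)))).mul hu3cont) ?_
        intro s hs
        exact mul_ne_zero (hsqD s hs).ne' (hu3ne s hs)
      have hkey : ∀ s ∈ I, κ s ^ 2 / (τ s ^ 2 + κ s ^ 2) ^ ((3:ℝ)/2)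
          * deriv (fun u => τ u / κ u) s = G s := by
        intro s hs
        have hκ := hκ0 s hs
        have hu3 := hu3ne s hs
        have hqs := hq s hs
        set qd : ℝ := (deriv τ s * κ s - τ s * deriv κ s) / κ s ^ 2 with hqd
        have hderiv : deriv (fun u => τ u / κ u) s = qd := hqs.deriv
        -- relation between qd and u3
        have hEq : κ s * d = -qd * u3 s + -(τ s / κ s) * (τ s * d) := by
          have h1 := (hqs.neg).mul (hu3' s hs)
          have h2 : HasDerivAt u1 (-qd * u3 s + -(τ s / κ s) * (τ s * d)) s := by
            refine h1.congr_of_eventuallyEq ?_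
            filter_upwards [hIopen.mem_nhds hs] with x hx
            have h := hrel x hx
            have hκx := hκ0 x hx
            show u1 x = -(τ x / κ x) * u3 x
            field_simp
            linarith
          exact (hu1' s hs).unique h2
        rw [hderiv, rpow_three_half (hD s hs), hG]
        have hmul := hmulD s hs
        have hs1 := (hsqD s hs).ne'
        have hτκ : τ s / κ s * κ s = τ s := div_mul_cancel₀ (τ s) hκ
        have hqdval : qd * (κ s * u3 s) = -(d * (τ s ^ 2 + κ s ^ 2)) := by
          linear_combination (κ s) * hEq - (τ s * d) * hτκ
        rw [div_mul_eq_mul_div, div_eq_div_iff (mul_ne_zero (hD s hs).ne' hs1) (mul_ne_zero hs1 hu3)]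
        linear_combination (κ s * Real.sqrt (τ s ^ 2 + κ s ^ 2)) * hqdval
      refine ⟨G s0, fun s hs => ?_⟩
      rw [hkey s hs]
      exact const_of_sq_const hIconn hGcont (by positivity) hGsq hs hs0
  · rintro ⟨c, hc⟩
    rcases I.eq_empty_or_nonempty with hIe | ⟨s0, hs0⟩
    · refine ⟨fun _ => 1, ?_, 0, fun s hs => by rw [hIe] at hs; exact absurd hs (Set.notMem_empty s)⟩
      intro h
      have := congrFun h 0
      norm_num at this
    set u1 : ℝ → ℝ := fun s => -τ s / Real.sqrt (τ s ^ 2 + κ s ^ 2) with hu1def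
    set u3 : ℝ → ℝ := fun s => κ s / Real.sqrt (τ s ^ 2 + κ s ^ 2) with hu3def
    set F : ℝ → Fin 3 → ℝ := fun s => u1 s • T s + c • N s + u3 s • B s with hF
    have hc' : ∀ s ∈ I, deriv τ s * κ s - τ s * deriv κ s
        = c * ((τ s ^ 2 + κ s ^ 2) * Real.sqrt (τ s ^ 2 + κ s ^ 2)) := by
      intro s hs
      have h := hc s hs
      rw [(hq s hs).deriv, rpow_three_half (hD s hs)] at h
      have hκ := hκ0 s hs
      have hDs := (hD s hs).ne'
      have hs1 := (hsqD s hs).ne'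
      rw [← h]
      field_simp
    have hsqrt' : ∀ s ∈ I, HasDerivAt (fun x => Real.sqrt (τ x ^ 2 + κ x ^ 2))
        ((2 * τ s ^ 1 * deriv τ s + 2 * κ s ^ 1 * deriv κ s) / (2 * Real.sqrt (τ s ^ 2 + κ s ^ 2))) s := by
      intro s hs
      exact (((hτd s hs).pow 2).add ((hκd s hs).pow 2)).sqrt (hD s hs).ne'
    have hu1' : ∀ s ∈ I, HasDerivAt u1 (-(c * κ s)) s := by
      intro s hs
      have h := ((hτd s hs).neg).div (hsqrt' s hs) (hsqD s hs).ne'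
      refine h.congr_deriv ?_
      symm
      have hmul := hmulD s hs
      have hs1 := (hsqD s hs).ne'
      have hDs := (hD s hs).ne'
      have hcc := hc' s hs
      field_simp
      simp only [Pi.neg_apply]
      linear_combination (deriv τ s - c * κ s * Real.sqrt (τ s ^ 2 + κ s ^ 2)) * hmul + κ s * hcc
    have hu3' : ∀ s ∈ I, HasDerivAt u3 (-(c * τ s)) s := by
      intro s hs
      have h := (hκd s hs).div (hsqrt' s hs) (hsqD s hs).ne'
      refine h.congr_deriv ?_
      symm
      have hmul := hmulD s hs
      have hs1 := (hsqD s hs).ne'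
      have hDs := (hD s hs).ne'
      have hcc := hc' s hs
      field_simp
      linear_combination (-(c * τ s * Real.sqrt (τ s ^ 2 + κ s ^ 2)) - deriv κ s) * hmul + τ s * hcc
    have hF' : ∀ s ∈ I, HasDerivAt F 0 s := by
      intro s hs
      have h1 := (hu1' s hs).smul (hT' s hs)
      have h2 := (hN' s hs).const_smul c
      have h3 := (hu3' s hs).smul (hB' s hs)
      have h := (h1.add h2).add h3
      refine h.congr_deriv ?_
      symm
      have key : u1 s * κ s + u3 s * τ s = 0 := by
        rw [hu1def, hu3def]
        beta_reduce
        ring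
      funext i
      simp only [Pi.add_apply, Pi.smul_apply, Pi.zero_apply, smul_eq_mul]
      linear_combination (N s i) * key
    refine ⟨F s0, ?_, -c, fun s hs => ?_⟩
    · intro h
      have h1 : mink (F s0) (B s0) = u3 s0 := by
        rw [hF, mink_comb_left, hTB s0 hs0, hNB s0 hs0, hBB s0 hs0]
        ring
      rw [h] at h1
      have h2 : mink 0 (B s0) = 0 := by simp [mink]
      rw [h2] at h1
      have := hκ0 s0 hs0
      have := (hsqD s0 hs0).ne'
      rw [hu3def] at h1
      simp only at h1
      exact (div_ne_zero (hκ0 s0 hs0) this) h1.symm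
    · have hFs : F s = F s0 := constOn hIconn hIopen hF' hs hs0
      rw [← hFs, hF, mink_comb_right, mink_comm (N s) (T s), hTN s hs, hNN s hs,
        hNB s hs]
      ring
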